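/- Let A be a positive normalized linear functional on L, let f ∈ C^n([a,b]) with n ≥ 2, and let g ∈ L with f∘g ∈ L. Then LR(f,g,a,b,A) = Σ_{k=2}^{n-1} f[b; a,…,a (k times)] · A[(g−b1)(g−a1)^{k−1}] + A(R*_1(g)), where R*_1(t) = (t−b)(t−a)^{n−1} · f[t; b; a,…,a ((n−1) times)]. -/

import Mathlib

/-!
Pointwise, `f x` minus its linear interpolant at `a` and `b` has the Newton expansion at the
nodes `b, a, a, …, a`, with remainder `(x - b) (x - a)^(n-1) [a, …, a, x, b] f`. This is a purely
algebraic identity between divided differences, proved by induction on the multiplicity of `a`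
from the two-sided recurrence of `divDiff`. Since `A` is linear and fixes constants, applying it
to the identity at `x = g t` gives the theorem.
-/

/-- Divided difference of `f` at a (sorted) list of points, with repeated points
handled via derivatives (taken within the set `s`). -/
noncomputable def divDiff (s : Set ℝ) (f : ℝ → ℝ) : List ℝ → ℝ
  | [] => 0
  | [x] => f x
  | x :: y :: l =>
    if x = (y :: l).getLast (List.cons_ne_nil y l) then
      iteratedDerivWithin (l.length + 1) f s x / Nat.factorial (l.length + 1)
    else
      (divDiff s f (y :: l) - divDiff s f (x :: (y :: l).dropLast)) /
        ((y :: l).getLast (List.cons_ne_nil y l) - x)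
termination_by l => l.length
decreasing_by
  all_goals simp [List.length_dropLast]

section DividedDifferences

variable (s : Set ℝ) (f : ℝ → ℝ)

lemma divDiff_singleton (x : ℝ) : divDiff s f [x] = f x := by
  simp [divDiff]

lemma divDiff_cons_of_ne_getLast (x : ℝ) {l : List ℝ} (hl : l ≠ []) (h : x ≠ l.getLast hl) :
    divDiff s f (x :: l) =
      (divDiff s f l - divDiff s f (x :: l.dropLast)) / (l.getLast hl - x) := by
  cases l with
  | nil => exact absurd rfl hl
  | cons y l => rw [divDiff, if_neg h]

lemma divDiff_pair {x y : ℝ} (h : x ≠ y) : divDiff s f [x, y] = (f y - f x) / (y - x) := by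
  rw [divDiff_cons_of_ne_getLast s f x (List.cons_ne_nil y []) h]
  simp [divDiff_singleton s f]

lemma sub_mul_divDiff_replicate_succ_append_singleton {a b : ℝ} (hab : a ≠ b) (k : ℕ) :
    (b - a) * divDiff s f (List.replicate (k + 1) a ++ [b]) =
      divDiff s f (List.replicate k a ++ [b]) - divDiff s f (List.replicate (k + 1) a) := by
  have hlast : (List.replicate k a ++ [b]).getLast (by simp) = b := List.getLast_concat
  rw [List.replicate_succ, List.cons_append,
    divDiff_cons_of_ne_getLast s f a (by simp) (by rw [hlast]; exact hab), hlast,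
    List.dropLast_concat, ← List.replicate_succ]
  field_simp [sub_ne_zero.mpr hab.symm]

lemma sub_mul_divDiff_replicate_succ_append_pair {a b : ℝ} (hab : a ≠ b) (x : ℝ) (k : ℕ) :
    (b - a) * divDiff s f (List.replicate (k + 1) a ++ [x, b]) =
      divDiff s f (List.replicate k a ++ [x, b]) -
        divDiff s f (List.replicate (k + 1) a ++ [x]) := by
  have hlast : (List.replicate k a ++ [x, b]).getLast (by simp) = b := by simp
  have hdrop : (List.replicate k a ++ [x, b]).dropLast = List.replicate k a ++ [x] := by
    rw [List.dropLast_append_cons]; rfl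
  rw [List.replicate_succ, List.cons_append,
    divDiff_cons_of_ne_getLast s f a (by simp) (by rw [hlast]; exact hab), hlast, hdrop,
    ← List.cons_append, ← List.replicate_succ]
  field_simp [sub_ne_zero.mpr hab.symm]

/-- The recurrence that removes the node `x` instead of an endpoint; it amounts to the
symmetry of divided differences, which `divDiff` does not provide directly. -/
lemma sub_mul_divDiff_replicate_append_pair_add {a b x : ℝ} (hab : a ≠ b) (hxa : x ≠ a)
    (k : ℕ) :
    (b - x) * divDiff s f (List.replicate k a ++ [x, b]) +
      divDiff s f (List.replicate k a ++ [x]) =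
    divDiff s f (List.replicate k a ++ [b]) := by
  induction k with
  | zero =>
    by_cases hxb : x = b
    · subst hxb; simp
    · have : b - x ≠ 0 := sub_ne_zero.mpr (Ne.symm hxb)
      simp only [List.replicate_zero, List.nil_append, divDiff_pair s f hxb, divDiff_singleton]
      field_simp
      ring
  | succ k ih =>
    have hx := sub_mul_divDiff_replicate_succ_append_singleton s f hxa.symm k
    have hb := sub_mul_divDiff_replicate_succ_append_singleton s f hab k
    have hxb := sub_mul_divDiff_replicate_succ_append_pair s f hab x k
    refine mul_left_cancel₀ (mul_ne_zero (sub_ne_zero.mpr hab.symm) (sub_ne_zero.mpr hxa)) ?_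
    linear_combination (x - a) * (b - x) * hxb + (x - a) * hx - (x - a) * hb + (x - a) * ih

lemma divDiff_replicate_append_pair_sub_mul {a b x : ℝ} (hab : a ≠ b) (hxa : x ≠ a) (k : ℕ) :
    divDiff s f (List.replicate k a ++ [x, b]) -
      (x - a) * divDiff s f (List.replicate (k + 1) a ++ [x, b]) =
    divDiff s f (List.replicate (k + 1) a ++ [b]) := by
  have hx := sub_mul_divDiff_replicate_succ_append_singleton s f hxa.symm k
  have hb := sub_mul_divDiff_replicate_succ_append_singleton s f hab k
  have hxb := sub_mul_divDiff_replicate_succ_append_pair s f hab x k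
  refine mul_left_cancel₀ (sub_ne_zero.mpr hab.symm) ?_
  linear_combination -(x - a) * hxb - hb + hx +
    sub_mul_divDiff_replicate_append_pair_add s f hab hxa k

theorem sub_linear_interpolation_eq_sum_divDiff_add {a b : ℝ} (hab : a ≠ b) {m : ℕ}
    (hm : 1 ≤ m) (x : ℝ) :
    f x - (b - x) / (b - a) * f a - (x - a) / (b - a) * f b =
      (∑ k ∈ Finset.Icc 2 m,
        divDiff s f (List.replicate k a ++ [b]) * ((x - b) * (x - a) ^ (k - 1))) +
      (x - b) * (x - a) ^ m * divDiff s f (List.replicate m a ++ [x, b]) := by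
  have hba : b - a ≠ 0 := sub_ne_zero.mpr hab.symm
  induction m, hm using Nat.le_induction with
  | base =>
    simp only [Finset.Icc_eq_empty_of_lt one_lt_two, Finset.sum_empty, zero_add, pow_one]
    by_cases hxa : x = a
    · subst hxa; field_simp; ring
    have hxb := sub_mul_divDiff_replicate_succ_append_pair s f hab x 0
    have hx := sub_mul_divDiff_replicate_append_pair_add s f hab hxa 0
    have hax := sub_mul_divDiff_replicate_succ_append_singleton s f (Ne.symm hxa) 0
    simp only [List.replicate_zero, List.nil_append, zero_add, List.replicate_one,
      List.singleton_append, divDiff_singleton] at hxb hx hax ⊢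
    field_simp
    linear_combination (a - x) * (x - b) * hxb + (x - a) * hx + (x - b) * hax
  | succ m hm ih =>
    rw [Finset.sum_Icc_succ_top (by omega), ih, Nat.add_sub_cancel]
    by_cases hxa : x = a
    · subst hxa
      simp [zero_pow (show m ≠ 0 by omega)]
    · linear_combination (x - b) * (x - a) ^ m *
        divDiff_replicate_append_pair_sub_mul s f hab hxa m

end DividedDifferences

lemma LinearMap.map_const_add_mul {E : Type*} (A : (E → ℝ) →ₗ[ℝ] ℝ)
    (hA1 : A (fun _ => 1) = 1) (α β : ℝ) (g : E → ℝ) :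
    A (fun t => α + β * g t) = α + β * A g := by
  have : (fun t => α + β * g t) = α • (fun _ => (1 : ℝ)) + β • g := by
    funext t; simp
  rw [this, map_add, map_smul, map_smul, hA1, smul_eq_mul, smul_eq_mul, mul_one]

theorem lemma22_m_eq_one_general {E : Type*}
    (a b : ℝ) (hab : a < b) (n : ℕ) (hn : 2 ≤ n)
    (f : ℝ → ℝ)
    (A : (E → ℝ) →ₗ[ℝ] ℝ)
    (hA1 : A (fun _ => (1 : ℝ)) = 1)
    (g : E → ℝ) :
    A (fun t => f (g t)) - (b - A g) / (b - a) * f a - (A g - a) / (b - a) * f b =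
      (∑ k ∈ Finset.Icc 2 (n - 1),
        divDiff (Set.Icc a b) f (List.replicate k a ++ [b]) *
          A (fun t => (g t - b) * (g t - a) ^ (k - 1))) +
      A (fun t => (g t - b) * (g t - a) ^ (n - 1) *
          divDiff (Set.Icc a b) f (List.replicate (n - 1) a ++ [g t, b])) := by
  have hba : b - a ≠ 0 := sub_ne_zero.mpr hab.ne'
  have expansion : (fun t => f (g t)) =
      (fun t => (b * f a - a * f b) / (b - a) + (f b - f a) / (b - a) * g t) +
      ((∑ k ∈ Finset.Icc 2 (n - 1), divDiff (Set.Icc a b) f (List.replicate k a ++ [b]) •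
          (fun t => (g t - b) * (g t - a) ^ (k - 1))) +
        (fun t => (g t - b) * (g t - a) ^ (n - 1) *
          divDiff (Set.Icc a b) f (List.replicate (n - 1) a ++ [g t, b]))) := by
    funext t
    simp only [Pi.add_apply, Finset.sum_apply, Pi.smul_apply, smul_eq_mul]
    rw [← sub_eq_zero, ← sub_linear_interpolation_eq_sum_divDiff_add _ f hab.ne
      (by omega : 1 ≤ n - 1) (g t)]
    field_simp
    ring
  rw [expansion, map_add, map_add, map_sum, A.map_const_add_mul hA1]
  simp only [map_smul, smul_eq_mul]
  field_simp
  ring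

/-- Identity (2.8) of Lemma 2.2: the mirror `(1, n-1)` Hermite expansion of the
Edmundson–Lah–Ribarič difference `LR(f,g,a,b,A)`. -/
theorem lemma22_m_eq_one {E : Type*} [Nonempty E]
    (a b : ℝ) (hab : a < b) (n : ℕ) (hn : 2 ≤ n)
    (f : ℝ → ℝ) (hf : ContDiffOn ℝ n f (Set.Icc a b))
    (A : (E → ℝ) →ₗ[ℝ] ℝ)
    (hApos : ∀ h : E → ℝ, (∀ t, 0 ≤ h t) → 0 ≤ A h)
    (hA1 : A (fun _ => (1 : ℝ)) = 1)
    (g : E → ℝ) (hg : ∀ t, g t ∈ Set.Icc a b) :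
    A (fun t => f (g t)) - (b - A g) / (b - a) * f a - (A g - a) / (b - a) * f b =
      (∑ k ∈ Finset.Icc 2 (n - 1),
        divDiff (Set.Icc a b) f (List.replicate k a ++ [b]) *
          A (fun t => (g t - b) * (g t - a) ^ (k - 1))) +
      A (fun t => (g t - b) * (g t - a) ^ (n - 1) *
          divDiff (Set.Icc a b) f (List.replicate (n - 1) a ++ [g t, b])) :=
  lemma22_m_eq_one_general a b hab n hn f A hA1 g
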